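/- Let k be a field of characteristic zero, d ≥ 1 an integer, and σ a k-algebra automorphism of the formal power series ring k[[X]] with σ^d = id. Then there exist ζ ∈ k with ζ^d = 1 and a uniformizer v of k[[X]] such that σ(v) = ζ·v (exactly, not merely modulo m²). -/

import Mathlib

/-!
Every `k`-algebra endomorphism of `k⟦X⟧` preserves constant coefficients, so `σ ↦ coeff 1 (σ X)`
is a character of the automorphism group; hence `ζ := coeff 1 (σ X)` satisfies `ζ ^ d = 1`.
The twisted average `v = ∑_{i<d} ζ⁻ⁱ σⁱ(X)` is then an exact `ζ`-eigenvector of `σ`, and its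
linear coefficient is `d`, which is nonzero in characteristic zero.
-/

open Finset PowerSeries

theorem Finset.sum_range_succ_eq_sum_range_of_apply_eq_apply_zero {M : Type*}
    [AddCancelCommMonoid M] {f : ℕ → M} {d : ℕ} (h : f d = f 0) :
    ∑ i ∈ range d, f (i + 1) = ∑ i ∈ range d, f i :=
  add_right_cancel (b := f 0) (by rw [← sum_range_succ', sum_range_succ, h])

theorem smul_sum_inv_pow_smul_pow_smul {G k M : Type*} [Monoid G] [Field k] [AddCommGroup M]
    [Module k M] [DistribMulAction G M] [SMulCommClass G k M] {g : G} {d : ℕ} {ζ : k}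
    (hg : g ^ d = 1) (hζ : ζ ^ d = 1) (x : M) :
    g • ∑ i ∈ range d, ζ⁻¹ ^ i • g ^ i • x = ζ • ∑ i ∈ range d, ζ⁻¹ ^ i • g ^ i • x := by
  rcases d.eq_zero_or_pos with rfl | hd
  · simp
  have hζ0 : ζ ≠ 0 := ne_zero_pow hd.ne' (hζ ▸ one_ne_zero)
  have hshift : ∀ i, g • (ζ⁻¹ ^ i • g ^ i • x) = ζ • (ζ⁻¹ ^ (i + 1) • g ^ (i + 1) • x) := by
    intro i
    rw [smul_comm g, ← mul_smul, ← pow_succ', smul_smul, pow_succ ζ⁻¹, mul_left_comm,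
      mul_inv_cancel₀ hζ0, mul_one]
  rw [smul_sum, sum_congr rfl fun i _ => hshift i, ← smul_sum,
    sum_range_succ_eq_sum_range_of_apply_eq_apply_zero (f := fun i => ζ⁻¹ ^ i • g ^ i • x)
      (by simp [hg, hζ])]

namespace PowerSeries

variable {k : Type*} [Field k]

section

variable {F : Type*} [FunLike F k⟦X⟧ k⟦X⟧] [AlgHomClass F k k⟦X⟧ k⟦X⟧]

theorem constantCoeff_map_X (φ : F) : constantCoeff (φ X) = 0 := by
  set t := constantCoeff (φ X)
  -- `X - C t` is a unit unless `t = 0`, but its image has constant coefficient `0`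
  have himage : ¬IsUnit (φ (X - C t)) := by
    rw [isUnit_iff_constantCoeff, map_sub, ← algebraMap_eq, AlgHomClass.commutes]
    simp [t]
  by_contra ht
  exact himage ((isUnit_iff_constantCoeff.mpr (by simpa using ht)).map φ)

theorem constantCoeff_map (φ : F) (f : k⟦X⟧) : constantCoeff (φ f) = constantCoeff f := by
  obtain ⟨g, hg⟩ := X_dvd_iff.mpr (show constantCoeff (f - C (constantCoeff f)) = 0 by simp)
  rw [sub_eq_iff_eq_add] at hg
  rw [hg, map_add, map_mul, ← algebraMap_eq, AlgHomClass.commutes]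
  simp [constantCoeff_map_X]

theorem coeff_one_map_of_constantCoeff_eq_zero (φ : F) {f : k⟦X⟧} (hf : constantCoeff f = 0) :
    coeff 1 (φ f) = coeff 1 (φ X) * coeff 1 f := by
  obtain ⟨g, rfl⟩ := X_dvd_iff.mpr hf
  simp [coeff_mul, Finset.Nat.sum_antidiagonal_succ, constantCoeff_map]

end

/-- The linear coefficient of `σ X`: the action of `σ` on the cotangent space `m / m²`. -/
noncomputable def linearCoeff : (k⟦X⟧ ≃ₐ[k] k⟦X⟧) →* k where
  toFun σ := coeff 1 (σ X)
  map_one' := coeff_one_X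
  map_mul' σ τ :=
    coeff_one_map_of_constantCoeff_eq_zero σ ((constantCoeff_map τ X).trans constantCoeff_X)

theorem linearCoeff_apply (σ : k⟦X⟧ ≃ₐ[k] k⟦X⟧) : linearCoeff σ = coeff 1 (σ X) := rfl

end PowerSeries

/-- linearization of a finite-order automorphism. If `char k = 0`,
`d ≥ 1` and `σ` is a `k`-algebra automorphism of `k⟦X⟧` with `σ^d = id`, then
there exist `ζ ∈ k` with `ζ^d = 1` and a uniformizer `v` with `σ v = ζ·v` exactly. -/
theorem finite_order_automorphism_linearizable {k : Type*} [Field k] [CharZero k]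
    (d : ℕ) (hd : 1 ≤ d) (σ : PowerSeries k ≃ₐ[k] PowerSeries k)
    (hσd : σ ^ d = 1) :
    ∃ (ζ : k) (v : PowerSeries k), ζ ^ d = 1 ∧
      constantCoeff v = 0 ∧ coeff 1 v ≠ 0 ∧ σ v = C ζ * v := by
  set ζ := linearCoeff σ
  have hζ : ζ ^ d = 1 := by rw [← map_pow, hσd, map_one]
  have hζ0 : ζ ≠ 0 := ne_zero_pow (by omega) (hζ ▸ one_ne_zero)
  refine ⟨ζ, ∑ i ∈ range d, ζ⁻¹ ^ i • (σ ^ i) • X, hζ, ?_, ?_, ?_⟩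
  · simp only [map_sum, constantCoeff_smul, AlgEquiv.smul_def, constantCoeff_map, constantCoeff_X,
      smul_zero, sum_const_zero]
  · have hterm (i : ℕ) : coeff 1 (ζ⁻¹ ^ i • (σ ^ i) • (X : k⟦X⟧)) = 1 := by
      rw [coeff_smul, AlgEquiv.smul_def, ← linearCoeff_apply, map_pow, inv_pow, smul_eq_mul,
        inv_mul_cancel₀ (pow_ne_zero i hζ0)]
    simp only [map_sum, hterm, sum_const, card_range, nsmul_eq_mul, mul_one]
    exact Nat.cast_ne_zero.mpr (by omega)
  · rw [← AlgEquiv.smul_def, smul_sum_inv_pow_smul_pow_smul hσd hζ, smul_eq_C_mul]
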